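/- For every integer d ≥ 3, the constant C₂ = 2^{(d-2)/2} ω_{d-2}/(2π)^{d-2} − 2G_{d-1,1}/π^{d-1} − ω_{d-2}/(2(2π)^{d-2}) is strictly positive, where ω_{d-2} = π^{(d-2)/2}/Γ(d/2) is the volume of the unit ball in ℝ^{d-2} and G_{d-1,1} is the iterated integral ∫_0^{π/2}⋯∫_0^{π/2} arccot(∏_{j=1}^{d-2} csc θ_j) ∏_{k=1}^{d-2} sin^k(θ_k) dθ₁⋯dθ_{d-2}. -/

import Mathlib

/-! Since `arccot p⁻¹ = arctan p ≤ p` for `p = ∏ⱼ sin θⱼ ≥ 0`, the integrand of `G` is at most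
`∏ₖ sin θₖ ^ (k + 2)`, so with `n = d - 2` Fubini bounds `G` by a product of Wallis integrals.
The formula `∫₀^{π/2} sin^m = (√π / 2) Γ(m/2 + 1/2) / Γ(m/2 + 1)` makes this product telescope to
`(√π / 2)^(n+1) / Γ(n/2 + 3/2)`. The claim then reduces to
`Γ(n/2 + 1) < (2^(n/2) - 1/2) √π Γ(n/2 + 3/2)`, which follows from `Γ x ≤ Γ (x + 1/2)` for
`x ≥ 3/2` and `(√2 - 1/2) √π > 1`. -/

open Real MeasureTheory

/-- The principal inverse cotangent, with values in `(0, π)`. -/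
noncomputable def arccot (x : ℝ) : ℝ := π / 2 - Real.arctan x

theorem Real.arctan_le_self {x : ℝ} (hx : 0 ≤ x) : arctan x ≤ x := by
  have h := le_tan (arctan_nonneg.mpr hx) (arctan_lt_pi_div_two x)
  rwa [tan_arctan] at h

theorem arccot_pos (x : ℝ) : 0 < arccot x := by
  unfold arccot; linarith [arctan_lt_pi_div_two x]

theorem arccot_inv_of_pos {x : ℝ} (hx : 0 < x) : arccot x⁻¹ = arctan x := by
  rw [arccot, arctan_inv_of_pos hx]; ring

theorem arccot_inv_mul_self_le {x : ℝ} (hx : 0 ≤ x) : arccot x⁻¹ * x ≤ x * x := by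
  rcases hx.eq_or_lt with rfl | hx
  · simp
  · rw [arccot_inv_of_pos hx]
    exact mul_le_mul_of_nonneg_right (arctan_le_self hx.le) hx.le

theorem arccot_prod_one_div_mul_prod_pow_le {ι : Type*} [Fintype ι] {f : ι → ℝ}
    (hf : ∀ i, 0 ≤ f i) (e : ι → ℕ) :
    arccot (∏ i, 1 / f i) * ∏ i, f i ^ (e i + 1) ≤ ∏ i, f i ^ (e i + 2) := by
  have hpow (m : ℕ) : ∏ i, f i ^ (e i + m) = (∏ i, f i) ^ m * ∏ i, f i ^ e i := by
    rw [← Finset.prod_pow, ← Finset.prod_mul_distrib]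
    exact Finset.prod_congr rfl fun i _ => by ring
  have hQ : 0 ≤ ∏ i, f i ^ e i := Finset.prod_nonneg fun i _ => pow_nonneg (hf i) _
  rw [hpow 1, hpow 2, pow_one, sq, ← mul_assoc]
  simp only [one_div, Finset.prod_inv_distrib]
  exact mul_le_mul_of_nonneg_right
    (arccot_inv_mul_self_le (Finset.prod_nonneg fun i _ => hf i)) hQ

theorem Real.Gamma_le_one_of_mem_Icc {x : ℝ} (hx : x ∈ Set.Icc 1 2) : Gamma x ≤ 1 := by
  have h := convexOn_Gamma.le_max_of_mem_Icc (by norm_num : (1 : ℝ) ∈ Set.Ioi 0)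
    (by norm_num : (2 : ℝ) ∈ Set.Ioi 0) hx
  rwa [Gamma_one, Gamma_two, max_self] at h

theorem Real.Gamma_le_Gamma_add_half {x : ℝ} (hx : 3 / 2 ≤ x) : Gamma x ≤ Gamma (x + 1 / 2) := by
  have hmono := Gamma_strictMonoOn_Ici.monotoneOn
  rcases le_total 2 x with h2 | h2
  · exact hmono h2 (show (2 : ℝ) ≤ x + 1 / 2 by linarith) (by linarith)
  · calc Gamma x ≤ Gamma 2 := by rw [Gamma_two]; exact Gamma_le_one_of_mem_Icc ⟨by linarith, h2⟩
      _ ≤ Gamma (x + 1 / 2) :=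
        hmono Set.self_mem_Ici (show (2 : ℝ) ≤ x + 1 / 2 by linarith) (by linarith)

theorem Real.Gamma_three_div_two : Gamma (3 / 2) = √π / 2 := by
  rw [show (3 / 2 : ℝ) = 1 / 2 + 1 by norm_num, Gamma_add_one (by norm_num), Gamma_one_half_eq]
  ring

noncomputable def wallisIntegral (m : ℕ) : ℝ := ∫ x in (0 : ℝ)..π / 2, sin x ^ m

theorem wallisIntegral_add_two (m : ℕ) :
    wallisIntegral (m + 2) = (m + 1) / (m + 2) * wallisIntegral m := by
  simp [wallisIntegral, integral_sin_pow]

theorem wallisIntegral_eq_Gamma (m : ℕ) :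
    wallisIntegral m = √π / 2 * Gamma (m / 2 + 1 / 2) / Gamma (m / 2 + 1) := by
  induction m using Nat.twoStepInduction with
  | zero =>
    have hhalf : Gamma 2⁻¹ = √π := by rw [← one_div, Gamma_one_half_eq]
    simp [wallisIntegral, hhalf]
    rw [div_mul_eq_mul_div, mul_self_sqrt pi_pos.le]
  | one =>
    norm_num [wallisIntegral, Gamma_three_div_two]
    exact (div_self (by positivity)).symm
  | more m ih _ =>
    rw [wallisIntegral_add_two, ih]
    push_cast
    rw [show (m + 2 : ℝ) / 2 + 1 / 2 = (m / 2 + 1 / 2) + 1 by ring,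
      show (m + 2 : ℝ) / 2 + 1 = (m / 2 + 1) + 1 by ring,
      Gamma_add_one (s := m / 2 + 1 / 2) (by positivity),
      Gamma_add_one (s := m / 2 + 1) (by positivity)]
    have := (Gamma_pos_of_pos (show 0 < (m : ℝ) / 2 + 1 / 2 by positivity)).ne'
    have := (Gamma_pos_of_pos (show 0 < (m : ℝ) / 2 + 1 by positivity)).ne'
    field_simp

theorem wallisIntegral_eq_setIntegral (m : ℕ) :
    wallisIntegral m = ∫ x in Set.Icc 0 (π / 2), sin x ^ m := by
  rw [wallisIntegral, intervalIntegral.integral_of_le (by positivity), integral_Icc_eq_integral_Ioc]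

theorem prod_wallisIntegral_add_two (n : ℕ) :
    ∏ k : Fin n, wallisIntegral (k + 2) = (√π / 2) ^ (n + 1) / Gamma (n / 2 + 3 / 2) := by
  induction n with
  | zero =>
    norm_num [Gamma_three_div_two]
    exact (div_self (by positivity)).symm
  | succ n ih =>
    rw [Fin.prod_univ_castSucc]
    simp only [Fin.val_castSucc, Fin.val_last]
    rw [ih, wallisIntegral_eq_Gamma]
    push_cast
    rw [show (n + 2 : ℝ) / 2 + 1 / 2 = n / 2 + 3 / 2 by ring,
      show (n + 1 : ℝ) / 2 + 3 / 2 = (n + 2) / 2 + 1 by ring]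
    have := (Gamma_pos_of_pos (show 0 < (n : ℝ) / 2 + 3 / 2 by positivity)).ne'
    field_simp
    ring

theorem integral_arccot_le_prod_wallisIntegral (n : ℕ) :
    ∫ θ : Fin n → ℝ in Set.univ.pi fun _ => Set.Icc 0 (π / 2),
        arccot (∏ j : Fin n, 1 / sin (θ j)) * ∏ k : Fin n, sin (θ k) ^ (k.1 + 1)
      ≤ ∏ k : Fin n, wallisIntegral (k + 2) := by
  set box : Set (Fin n → ℝ) := Set.univ.pi fun _ => Set.Icc 0 (π / 2)
  have hbox : MeasurableSet box := MeasurableSet.univ_pi fun _ => measurableSet_Icc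
  have hsin : ∀ θ ∈ box, ∀ k, 0 ≤ sin (θ k) := fun θ hθ k =>
    sin_nonneg_of_nonneg_of_le_pi (hθ k trivial).1 ((hθ k trivial).2.trans (by linarith [pi_pos]))
  calc _ ≤ ∫ θ in box, ∏ k : Fin n, sin (θ k) ^ (k.1 + 2) := by
        refine integral_mono_of_nonneg (ae_restrict_of_forall_mem hbox fun θ hθ => ?_) ?_
          (ae_restrict_of_forall_mem hbox fun θ hθ =>
            arccot_prod_one_div_mul_prod_pow_le (hsin θ hθ) _)
        · exact mul_nonneg (arccot_pos _).le
            (Finset.prod_nonneg fun k _ => pow_nonneg (hsin θ hθ k) _)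
        · exact (Continuous.continuousOn (by fun_prop)).integrableOn_compact
            (isCompact_univ_pi fun _ => isCompact_Icc)
    _ = ∏ k : Fin n, wallisIntegral (k + 2) := by
        rw [volume_pi, Measure.restrict_pi_pi]
        simp only [wallisIntegral_eq_setIntegral]
        exact integral_fintype_prod_eq_prod fun (k : Fin n) x => sin x ^ (k.1 + 2)

theorem one_lt_sqrt_two_sub_half_mul_sqrt_pi {a : ℝ} (ha : √2 ≤ a) : 1 < (a - 1 / 2) * √π := by
  have h2 : 1.4 < √2 := by rw [lt_sqrt (by norm_num)]; norm_num
  have hπ : 1.7 < √π := by rw [lt_sqrt (by norm_num)]; linarith [pi_gt_three]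
  nlinarith

theorem two_mul_div_pi_pow_succ_lt {n : ℕ} {a G Γ Γ' : ℝ} (ha : √2 ≤ a) (hΓ : 0 < Γ)
    (hΓΓ' : Γ ≤ Γ') (hG : G ≤ (√π / 2) ^ (n + 1) / Γ') :
    2 * G / π ^ (n + 1) < (a - 1 / 2) * (√π ^ n / Γ) / (2 * π) ^ n := by
  have key := one_lt_sqrt_two_sub_half_mul_sqrt_pi ha
  set r := √π
  have hr : r ^ 2 = π := sq_sqrt pi_pos.le
  have hr0 : 0 < r := sqrt_pos.mpr pi_pos
  calc 2 * G / π ^ (n + 1) ≤ 2 * ((r / 2) ^ (n + 1) / Γ') / π ^ (n + 1) := by gcongr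
    _ = 1 / ((2 * r) ^ n * r * Γ') := by rw [← hr, div_pow]; field_simp; ring
    _ ≤ 1 / ((2 * r) ^ n * r * Γ) := by gcongr
    _ < (a - 1 / 2) / ((2 * r) ^ n * Γ) := by
      rw [div_lt_div_iff₀ (by positivity) (by positivity)]
      have : 0 < (2 * r) ^ n * Γ := by positivity
      nlinarith
    _ = (a - 1 / 2) * (r ^ n / Γ) / (2 * π) ^ n := by rw [← hr]; field_simp; ring

theorem stmt12 (d : ℕ) (hd : 3 ≤ d)
    (ω G : ℝ)
    (hω : ω = π ^ (((d : ℝ) - 2) / 2) / Real.Gamma (d / 2))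
    (hG : G = ∫ θ : Fin (d - 2) → ℝ in Set.univ.pi fun _ => Set.Icc 0 (π / 2),
        arccot (∏ j : Fin (d - 2), 1 / Real.sin (θ j)) *
          ∏ k : Fin (d - 2), (Real.sin (θ k)) ^ (k.1 + 1)) :
    0 < (2 : ℝ) ^ (((d : ℝ) - 2) / 2) * ω / (2 * π) ^ (d - 2)
        - 2 * G / π ^ (d - 1) - ω / (2 * (2 * π) ^ (d - 2)) := by
  obtain ⟨n, rfl⟩ : ∃ n, d = n + 2 := ⟨d - 2, by omega⟩
  have hn : (1 : ℝ) ≤ n := by exact_mod_cast (by omega : 1 ≤ n)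
  rw [show n + 2 - 2 = n from rfl, show n + 2 - 1 = n + 1 from rfl]
  have hexp : ((n + 2 : ℕ) : ℝ) - 2 = n := by push_cast; ring
  rw [hexp] at hω ⊢
  have hΓΓ' : Gamma (n / 2 + 1) ≤ Gamma (n / 2 + 3 / 2) := by
    convert Gamma_le_Gamma_add_half (show 3 / 2 ≤ (n : ℝ) / 2 + 1 by linarith) using 2; ring
  have hω' : ω = √π ^ n / Gamma (n / 2 + 1) := by
    rw [hω, rpow_div_two_eq_sqrt _ pi_pos.le, rpow_natCast]
    congr 2
    push_cast
    ring
  have hGle : G ≤ (√π / 2) ^ (n + 1) / Gamma (n / 2 + 3 / 2) :=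
    hG ▸ (integral_arccot_le_prod_wallisIntegral n).trans_eq (prod_wallisIntegral_add_two n)
  have ha : √2 ≤ 2 ^ ((n : ℝ) / 2) := by
    rw [sqrt_eq_rpow]; exact rpow_le_rpow_of_exponent_le (by norm_num) (by linarith)
  rw [show ∀ a X : ℝ, a * ω / X - 2 * G / π ^ (n + 1) - ω / (2 * X)
      = (a - 1 / 2) * ω / X - 2 * G / π ^ (n + 1) from fun _ _ => by ring, sub_pos, hω']
  exact two_mul_div_pi_pow_succ_lt ha (Gamma_pos_of_pos (by positivity)) hΓΓ' hGle
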